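/- arXiv:math/0402418 — 6 statements merged into one kernel-verified Lean document; each statement's English description precedes it below -/
import Mathlib

section
/- Let I be a homogeneous ideal in S = k[x_0,...,x_r], and let τ be an elimination order for x_0 inducing a term order τ_0 on S̄ = k[x_1,...,x_r]. Then the initial ideal of I decomposes as in_τ(I) = Σ_p x_0^p · in_{τ_0}(K_p(I)), where K_p(I) is the p-th partial elimination ideal of I. -/
open MvPolynomial

/-- A finite graded free resolution of a (homogeneous) ideal `I` in a polynomial ring. -/
structure GradedFreeRes {k : Type*} [Field k] {N : ℕ}
    (I : Ideal (MvPolynomial (Fin N) k)) where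
  rk : ℕ → ℕ
  shift : (i : ℕ) → Fin (rk i) → ℕ
  len : ℕ
  rk_eq_zero : ∀ i, len < i → rk i = 0
  gen : Fin (rk 0) → MvPolynomial (Fin N) k
  gen_hom : ∀ j, (gen j).IsHomogeneous (shift 0 j)
  mat : (i : ℕ) → Matrix (Fin (rk i)) (Fin (rk (i + 1))) (MvPolynomial (Fin N) k)
  mat_hom : ∀ i a b, mat i a b = 0 ∨
    (shift i a ≤ shift (i + 1) b ∧ (mat i a b).IsHomogeneous (shift (i + 1) b - shift i a))
  aug_surj : LinearMap.range
    (Fintype.linearCombination (MvPolynomial (Fin N) k) gen) = I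
  aug_exact : LinearMap.range (mat 0).mulVecLin =
    LinearMap.ker
      (Fintype.linearCombination (MvPolynomial (Fin N) k) gen)
  complex_exact : ∀ i,
    LinearMap.range (mat (i + 1)).mulVecLin = LinearMap.ker (mat i).mulVecLin

/-- The Castelnuovo–Mumford regularity of a homogeneous ideal, defined as the minimum over
all finite graded free resolutions of `I` of the maximum of `shift i j - i`. -/
noncomputable def cmReg {k : Type*} [Field k] {N : ℕ}
    (I : Ideal (MvPolynomial (Fin N) k)) : ℕ :=
  sInf { d | ∃ R : GradedFreeRes I, ∀ i, ∀ j : Fin (R.rk i), R.shift i j ≤ d + i }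

/-- The leading exponent (degree) of a polynomial with respect to a monomial order. -/
noncomputable def ldeg {k : Type*} [Field k] {N : ℕ} (τ : MonomialOrder (Fin N))
    (f : MvPolynomial (Fin N) k) : Fin N →₀ ℕ :=
  τ.toSyn.symm (f.support.sup fun m => τ.toSyn m)

/-- The initial ideal of `I` with respect to a monomial order `τ`. -/
noncomputable def initialIdeal {k : Type*} [Field k] {N : ℕ} (τ : MonomialOrder (Fin N))
    (I : Ideal (MvPolynomial (Fin N) k)) : Ideal (MvPolynomial (Fin N) k) :=
  Ideal.span { q | ∃ f ∈ I, f ≠ 0 ∧ q = monomial (ldeg τ f) (1 : k) }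

/-- A homogeneous ideal: one containing all homogeneous components of its elements. -/
def IsHomogeneousIdeal {k : Type*} [Field k] {N : ℕ}
    (I : Ideal (MvPolynomial (Fin N) k)) : Prop :=
  ∀ f ∈ I, ∀ d : ℕ, homogeneousComponent d f ∈ I

/-- The `p`-th partial elimination ideal (as a set): leading coefficients with respect to the
variable `x₀` of the elements of `I` of `x₀`-degree `p`, together with `0`. -/
noncomputable def pelimSet {k : Type*} [Field k] {N : ℕ}
    (I : Ideal (MvPolynomial (Fin (N + 1)) k)) (p : ℕ) :
    Set (MvPolynomial (Fin N) k) :=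
  insert 0 { h | ∃ f ∈ I, f ≠ 0 ∧ (finSuccEquiv k N f).natDegree = p ∧
    (finSuccEquiv k N f).leadingCoeff = h }

/-- An elimination order for the first variable: any monomial involving `x₀` is larger than
any monomial not involving `x₀`. -/
def IsElimOrder {N : ℕ} (τ : MonomialOrder (Fin (N + 1))) : Prop :=
  ∀ a b : Fin (N + 1) →₀ ℕ, a 0 = 0 → b 0 ≠ 0 → τ.toSyn a < τ.toSyn b

/-- `τ₀` is the restriction of `τ` to the last `N` variables. -/
def InducedOrder {N : ℕ} (τ : MonomialOrder (Fin (N + 1))) (τ₀ : MonomialOrder (Fin N)) : Prop :=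
  ∀ a b : Fin N →₀ ℕ,
    τ₀.toSyn a ≤ τ₀.toSyn b ↔ τ.toSyn (a.mapDomain Fin.succ) ≤ τ.toSyn (b.mapDomain Fin.succ)

/-- The linear change of coordinates on a polynomial ring given by a matrix. -/
noncomputable def coordChange {k : Type*} [Field k] {N : ℕ}
    (g : Matrix (Fin N) (Fin N) k) :
    MvPolynomial (Fin N) k →ₐ[k] MvPolynomial (Fin N) k :=
  aeval fun i => ∑ j, C (g i j) * X j

/-- `J` is the generic initial ideal of `I` with respect to `τ`: for every change of
coordinates `g` in a nonempty Zariski-open subset of `GL_N`, the initial ideal of `g · I`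
is `J`. -/
noncomputable def IsGin {k : Type*} [Field k] {N : ℕ} (τ : MonomialOrder (Fin N))
    (I J : Ideal (MvPolynomial (Fin N) k)) : Prop :=
  ∃ P : MvPolynomial (Fin N × Fin N) k, P ≠ 0 ∧
    ∀ g : Matrix (Fin N) (Fin N) k, IsUnit g.det →
      eval (fun q => g q.1 q.2) P ≠ 0 →
        initialIdeal τ (Ideal.map (coordChange g).toRingHom I) = J


/-!
With `τ` an elimination order inducing `τ₀`, the `τ`-leading monomial of `f ≠ 0`, viewed as a
polynomial in `x₀` over `k[x₁, …, x_N]`, is `x₀ ^ p · in_{τ₀}(c)` where `p` is the `x₀`-degree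
of `f` and `c` its initial coefficient: the monomials of `f` with a smaller power of `x₀` are
smaller by the elimination property, and among those with `x₀ ^ p` the order is `τ₀`.
Since `K_p(I)` is already an ideal, every nonzero element of it is the initial coefficient of
some `f ∈ I` of `x₀`-degree `p`, so both inclusions follow generator by generator.
-/

namespace Finsupp

theorem mapDomain_succ_apply_zero {M : Type*} [AddCommMonoid M] {N : ℕ} (d : Fin N →₀ M) :
    d.mapDomain Fin.succ 0 = 0 :=
  mapDomain_of_notMem_range _ _ (by simp [Set.range])

theorem cons_eq_single_zero_add_mapDomain_succ {M : Type*} [AddCommMonoid M] {N : ℕ}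
    (y : M) (d : Fin N →₀ M) : d.cons y = single 0 y + d.mapDomain Fin.succ := by
  ext j
  refine Fin.cases ?_ (fun j => ?_) j
  · simp [mapDomain_succ_apply_zero]
  · simp [mapDomain_apply (Fin.succ_injective N)]

end Finsupp

open Finsupp (cons_eq_single_zero_add_mapDomain_succ mapDomain_succ_apply_zero)

section Orders

variable {N : ℕ} {τ : MonomialOrder (Fin (N + 1))}

theorem IsElimOrder.toSyn_lt_of_apply_zero_lt (helim : IsElimOrder τ)
    {a b : Fin (N + 1) →₀ ℕ} (h : a 0 < b 0) : τ.toSyn a < τ.toSyn b := by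
  have ha : a = Finsupp.single 0 (a 0) + (Finsupp.tail a).mapDomain Fin.succ := by
    rw [← cons_eq_single_zero_add_mapDomain_succ, Finsupp.cons_tail]
  have hb : b = Finsupp.single 0 (a 0) +
      (Finsupp.single 0 (b 0 - a 0) + (Finsupp.tail b).mapDomain Fin.succ) := by
    rw [← add_assoc, ← Finsupp.single_add, Nat.add_sub_cancel' h.le,
      ← cons_eq_single_zero_add_mapDomain_succ, Finsupp.cons_tail]
  have htail : τ.toSyn ((Finsupp.tail a).mapDomain Fin.succ) <
      τ.toSyn (Finsupp.single 0 (b 0 - a 0) + (Finsupp.tail b).mapDomain Fin.succ) :=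
    helim _ _ (mapDomain_succ_apply_zero _)
      (by simp [mapDomain_succ_apply_zero, Nat.sub_ne_zero_of_lt h])
  rw [ha, hb, map_add, map_add (τ.toSyn) (Finsupp.single 0 (a 0))]
  exact add_lt_add_right htail _

theorem InducedOrder.toSyn_cons_le_cons_iff {τ₀ : MonomialOrder (Fin N)}
    (hind : InducedOrder τ τ₀) (p : ℕ) (a b : Fin N →₀ ℕ) :
    τ.toSyn (a.cons p) ≤ τ.toSyn (b.cons p) ↔ τ₀.toSyn a ≤ τ₀.toSyn b := by
  rw [cons_eq_single_zero_add_mapDomain_succ, cons_eq_single_zero_add_mapDomain_succ, map_add,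
    map_add, add_le_add_iff_left, hind]

end Orders

theorem MonomialOrder.degree_eq_cons_natDegree_finSuccEquiv {R : Type*} [CommSemiring R]
    {N : ℕ} {τ : MonomialOrder (Fin (N + 1))} {τ₀ : MonomialOrder (Fin N)}
    (helim : IsElimOrder τ) (hind : InducedOrder τ τ₀)
    {f : MvPolynomial (Fin (N + 1)) R} (hf : f ≠ 0) :
    τ.degree f = Finsupp.cons (finSuccEquiv R N f).natDegree
      (τ₀.degree (finSuccEquiv R N f).leadingCoeff) := by
  set P := finSuccEquiv R N f
  have hP : P ≠ 0 := (map_ne_zero_iff _ (finSuccEquiv R N).injective).mpr hf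
  have hmem : (τ₀.degree P.leadingCoeff).cons P.natDegree ∈ f.support := by
    rw [← mem_support_coeff_finSuccEquiv, Polynomial.coeff_natDegree]
    exact τ₀.degree_mem_support (Polynomial.leadingCoeff_ne_zero.mpr hP)
  apply τ.toSyn.injective
  refine le_antisymm (τ.degree_le_iff.mpr fun m hm => ?_) (τ.le_degree hmem)
  have hm0 : m 0 ≤ P.natDegree := by
    rw [natDegree_finSuccEquiv]
    exact monomial_le_degreeOf 0 hm
  rcases hm0.lt_or_eq with hlt | heq
  · exact (helim.toSyn_lt_of_apply_zero_lt (by rwa [Finsupp.cons_zero])).le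
  · have htail : Finsupp.tail m ∈ P.leadingCoeff.support := by
      rwa [← Polynomial.coeff_natDegree, mem_support_coeff_finSuccEquiv, ← heq,
        Finsupp.cons_tail]
    rw [← Finsupp.cons_tail m, heq, hind.toSyn_cons_le_cons_iff]
    exact τ₀.le_degree htail

theorem monomial_cons_one {R : Type*} [CommSemiring R] {N : ℕ} (p : ℕ) (d : Fin N →₀ ℕ) :
    (monomial (d.cons p) (1 : R) : MvPolynomial (Fin (N + 1)) R) =
      X 0 ^ p * rename Fin.succ (monomial d 1) := by
  rw [rename_monomial, X_pow_eq_monomial, monomial_mul, one_mul,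
    ← cons_eq_single_zero_add_mapDomain_succ]

theorem finSuccEquiv_rename_succ {R : Type*} [CommSemiring R] {N : ℕ}
    (c : MvPolynomial (Fin N) R) : finSuccEquiv R N (rename Fin.succ c) = Polynomial.C c := by
  induction c using MvPolynomial.induction_on with
  | C a => simp [finSuccEquiv_apply]
  | add p q hp hq => simp [map_add, hp, hq]
  | mul_X p i hp => simp [map_mul, hp, finSuccEquiv_X_succ]

section PartialElimination

variable {k : Type*} [Field k] {N : ℕ} {I : Ideal (MvPolynomial (Fin (N + 1)) k)} {p : ℕ}

theorem monomial_ldeg_eq {τ : MonomialOrder (Fin (N + 1))} {τ₀ : MonomialOrder (Fin N)}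
    (helim : IsElimOrder τ) (hind : InducedOrder τ τ₀)
    {f : MvPolynomial (Fin (N + 1)) k} (hf : f ≠ 0) :
    monomial (ldeg τ f) (1 : k) = X 0 ^ (finSuccEquiv k N f).natDegree *
      rename Fin.succ (monomial (ldeg τ₀ (finSuccEquiv k N f).leadingCoeff) 1) :=
  -- `ldeg τ` unfolds to `τ.degree`
  (congrArg (monomial · 1) (τ.degree_eq_cons_natDegree_finSuccEquiv helim hind hf)).trans
    (monomial_cons_one _ _)

theorem mem_pelimSet_iff {h : MvPolynomial (Fin N) k} :
    h ∈ pelimSet I p ↔ ∃ f ∈ I, (finSuccEquiv k N f).natDegree ≤ p ∧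
      (finSuccEquiv k N f).coeff p = h := by
  constructor
  · rintro (rfl | ⟨f, hfI, -, hdeg, rfl⟩)
    · exact ⟨0, I.zero_mem, by simp⟩
    · exact ⟨f, hfI, hdeg.le, hdeg ▸ Polynomial.coeff_natDegree⟩
  · rintro ⟨f, hfI, hdeg, rfl⟩
    by_cases hc : (finSuccEquiv k N f).coeff p = 0
    · exact Or.inl hc
    have hdeg' := Polynomial.natDegree_eq_of_le_of_coeff_ne_zero hdeg hc
    refine Or.inr ⟨f, hfI, fun hf => hc (by simp [hf]), hdeg', ?_⟩
    rw [Polynomial.leadingCoeff, hdeg']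

def partialElimIdeal (I : Ideal (MvPolynomial (Fin (N + 1)) k)) (p : ℕ) :
    Ideal (MvPolynomial (Fin N) k) where
  carrier := pelimSet I p
  zero_mem' := Set.mem_insert _ _
  add_mem' {a b} ha hb := by
    obtain ⟨f, hfI, hf, rfl⟩ := mem_pelimSet_iff.mp ha
    obtain ⟨g, hgI, hg, rfl⟩ := mem_pelimSet_iff.mp hb
    refine mem_pelimSet_iff.mpr ⟨f + g, I.add_mem hfI hgI, ?_, by simp⟩
    rw [map_add]
    exact (Polynomial.natDegree_add_le _ _).trans (max_le hf hg)
  smul_mem' c {a} ha := by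
    obtain ⟨f, hfI, hf, rfl⟩ := mem_pelimSet_iff.mp ha
    refine mem_pelimSet_iff.mpr ⟨rename Fin.succ c * f, I.mul_mem_left _ hfI, ?_, ?_⟩
    · rw [map_mul, finSuccEquiv_rename_succ]
      exact Polynomial.natDegree_C_mul_le _ _ |>.trans hf
    · rw [map_mul, finSuccEquiv_rename_succ, Polynomial.coeff_C_mul, smul_eq_mul]

theorem span_pelimSet : Ideal.span (pelimSet I p) = partialElimIdeal I p :=
  Ideal.span_eq (partialElimIdeal I p)

end PartialElimination

theorem stmt1_general {k : Type*} [Field k] {N : ℕ} (τ : MonomialOrder (Fin (N + 1)))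
    (τ₀ : MonomialOrder (Fin N)) (helim : IsElimOrder τ) (hind : InducedOrder τ τ₀)
    (I : Ideal (MvPolynomial (Fin (N + 1)) k)) :
    initialIdeal τ I = ⨆ p : ℕ,
      Ideal.span {(X 0 : MvPolynomial (Fin (N + 1)) k) ^ p} *
        Ideal.map (rename (Fin.succ : Fin N → Fin (N + 1))).toRingHom
          (initialIdeal τ₀ (Ideal.span (pelimSet I p))) := by
  simp only [span_pelimSet]
  apply le_antisymm
  · rw [initialIdeal, Ideal.span_le]
    rintro _ ⟨f, hfI, hf, rfl⟩
    have hlc : (finSuccEquiv k N f).leadingCoeff ∈ partialElimIdeal I _ :=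
      Or.inr ⟨f, hfI, hf, rfl, rfl⟩
    have hlc0 : (finSuccEquiv k N f).leadingCoeff ≠ 0 := by simpa using hf
    rw [SetLike.mem_coe, monomial_ldeg_eq helim hind hf]
    exact Submodule.mem_iSup_of_mem _ <| Ideal.mul_mem_mul (Ideal.mem_span_singleton_self _) <|
      Ideal.mem_map_of_mem _ <| Ideal.subset_span ⟨_, hlc, hlc0, rfl⟩
  · refine iSup_le fun p => ?_
    rw [initialIdeal, Ideal.map_span, Ideal.span_mul_span', Ideal.span_le]
    rintro _ ⟨_, rfl, _, ⟨_, ⟨g, hg, hg0, rfl⟩, rfl⟩, rfl⟩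
    obtain ⟨f, hfI, hf, rfl, rfl⟩ := (hg : g ∈ pelimSet I p).resolve_left hg0
    have hin : monomial (ldeg τ f) (1 : k) ∈ initialIdeal τ I :=
      Ideal.subset_span ⟨f, hfI, hf, rfl⟩
    rwa [monomial_ldeg_eq helim hind hf] at hin

/-- For a homogeneous ideal `I` and an elimination order `τ` for `x₀` inducing `τ₀` on the
remaining variables, the initial ideal decomposes as
`in_τ(I) = Σ_p x₀^p · in_{τ₀}(K_p(I))`. -/
theorem stmt1 {k : Type*} [Field k] {N : ℕ} (τ : MonomialOrder (Fin (N + 1)))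
    (τ₀ : MonomialOrder (Fin N)) (helim : IsElimOrder τ) (hind : InducedOrder τ τ₀)
    (I : Ideal (MvPolynomial (Fin (N + 1)) k)) (hI : IsHomogeneousIdeal I) :
    initialIdeal τ I = ⨆ p : ℕ,
      Ideal.span {(X 0 : MvPolynomial (Fin (N + 1)) k) ^ p} *
        Ideal.map (rename (Fin.succ : Fin N → Fin (N + 1))).toRingHom
          (initialIdeal τ₀ (Ideal.span (pelimSet I p))) :=
  stmt1_general τ τ₀ helim hind I
end

section
/- Let f, g ∈ k[x] be monic univariate polynomials of degrees a and b with a ≤ b, over a field k, and let 0 ≤ p < a. The truncated Sylvester matrix Syl_p(f,g) (the first a+b-p rows of the Sylvester matrix) has kernel of dimension ≥ p+1 if and only if gcd(f,g) has degree ≥ p+1. -/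
/-!
Put `a = deg f`, `b = deg g`, `h = gcd f g`. Through coefficient vectors, the kernel of
`Syl_p(f, g)` is the space of pairs `(A, B)` with `deg A < b`, `deg B < a`, `deg (A f + B g) < p`.

If `deg h > p`, the pairs `(P g / h, -P f / h)` with `deg P ≤ p` form a `(p + 1)`-dimensional
subspace of it. If `deg h ≤ p`, every multiple of `h` of degree `< a + b` is some `A f + B g`
with `deg A < b`, `deg B < a` (Bézout, then reduce the cofactor of `g` modulo `f`), and each
`X ^ n` agrees with the multiple `X ^ n - X ^ n % h` of `h` in all degrees `≥ p`; so `Syl_p` is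
surjective and its kernel has dimension at most `p`.
-/

/-- The matrix consisting of the first `a + b - p` rows of the Sylvester matrix of `f` and `g`
(rows record the coefficients of `x^(a+b-1)` down to `x^p` of `A·f + B·g`; the columns indexed
by `Fin b` correspond to `x^j·f`, those indexed by `Fin a` to `x^i·g`). -/
noncomputable def sylMat {k : Type*} [Field k] (f g : Polynomial k) (a b p : ℕ) :
    Matrix (Fin (a + b - p)) (Fin b ⊕ Fin a) k := fun r c =>
  Sum.elim
    (fun j : Fin b => if (j : ℕ) ≤ a + b - 1 - (r : ℕ) then
      f.coeff (a + b - 1 - (r : ℕ) - (j : ℕ)) else 0)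
    (fun i : Fin a => if (i : ℕ) ≤ a + b - 1 - (r : ℕ) then
      g.coeff (a + b - 1 - (r : ℕ) - (i : ℕ)) else 0) c

open Polynomial Module Matrix

theorem Polynomial.coeff_mul_eq_sum_fin {R : Type*} [Semiring R] {A : R[X]} {n : ℕ}
    (hA : A.degree < n) (f : R[X]) (N : ℕ) :
    (A * f).coeff N =
      ∑ j : Fin n, A.coeff j * if (j : ℕ) ≤ N then f.coeff (N - j) else 0 := by
  conv_lhs => rw [← A.sum_monomial_eq, ← sum_fin _ (fun i => monomial_zero_right i) hA]
  simp only [Finset.sum_mul, finsetSum_coeff, ← C_mul_X_pow_eq_monomial, mul_assoc,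
    coeff_C_mul, coeff_X_pow_mul']

theorem Polynomial.degree_mul_lt_add_natDegree {R : Type*} [Semiring R] [NoZeroDivisors R]
    {P q : R[X]} {n : ℕ} (hq : q ≠ 0) (hP : P.degree < n) :
    (P * q).degree < (n + q.natDegree : ℕ) := by
  rw [degree_mul, degree_eq_natDegree hq, Nat.cast_add]
  exact WithBot.add_lt_add_right (WithBot.coe_ne_bot) hP

theorem Polynomial.exists_degree_lt_mul_add_mul_eq {K : Type*} [Field K] {f g : K[X]}
    (hf : f ≠ 0) (hg : g ≠ 0) (u v : K[X])
    (hP : (u * f + v * g).degree < (f.natDegree + g.natDegree : ℕ)) :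
    ∃ A B : K[X], A.degree < g.natDegree ∧ B.degree < f.natDegree ∧
      A * f + B * g = u * f + v * g := by
  have hB : (v % f).degree < f.natDegree := degree_eq_natDegree hf ▸ degree_mod_lt v hf
  have hAB : (u + g * (v / f)) * f + v % f * g = u * f + v * g := by
    linear_combination g * EuclideanDomain.div_add_mod v f
  refine ⟨_, _, ?_, hB, hAB⟩
  have hAf : ((u + g * (v / f)) * f).degree < (f.natDegree + g.natDegree : ℕ) := by
    rw [eq_sub_of_add_eq hAB]
    refine (degree_sub_le _ _).trans_lt (max_lt hP ?_)
    simpa only [add_comm] using degree_mul_lt_add_natDegree hg hB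
  rw [degree_mul, degree_eq_natDegree hf, add_comm f.natDegree, Nat.cast_add] at hAf
  exact (WithBot.add_lt_add_iff_right WithBot.coe_ne_bot).1 hAf

section Sylvester

variable {K : Type*} [Field K]

def sylCoeffs (a b : ℕ) : K[X] × K[X] →ₗ[K] (Fin b ⊕ Fin a → K) where
  toFun AB := Sum.elim (fun j => AB.1.coeff j) (fun i => AB.2.coeff i)
  map_add' _ _ := by ext (j | i) <;> simp
  map_smul' _ _ := by ext (j | i) <;> simp

theorem sylMat_mulVec_sylCoeffs (f g : K[X]) {a b : ℕ} (p : ℕ) {A B : K[X]}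
    (hA : A.degree < b) (hB : B.degree < a) (r : Fin (a + b - p)) :
    (sylMat f g a b p *ᵥ sylCoeffs a b (A, B)) r = (A * f + B * g).coeff (a + b - 1 - r) := by
  rw [coeff_add, coeff_mul_eq_sum_fin hA, coeff_mul_eq_sum_fin hB]
  simp only [mulVec, dotProduct, Fintype.sum_sum_type, sylMat, sylCoeffs, LinearMap.coe_mk,
    AddHom.coe_mk, Sum.elim_inl, Sum.elim_inr, mul_comm]

theorem Matrix.finrank_ker_mulVecLin_add_of_surjective {m : ℕ} {ι : Type*} [Fintype ι]
    (M : Matrix (Fin m) ι K) (hM : Function.Surjective M.mulVecLin) :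
    finrank K (LinearMap.ker M.mulVecLin) + m = Fintype.card ι := by
  have := M.mulVecLin.finrank_range_add_finrank_ker
  rw [LinearMap.range_eq_top.2 hM, finrank_top] at this
  simpa [add_comm] using this

theorem lt_finrank_ker_sylMat {f g h : K[X]} (hf : f ≠ 0) (hg : g ≠ 0) (hhf : h ∣ f)
    (hhg : h ∣ g) {p : ℕ} (hp : p < h.natDegree) :
    p < finrank K (LinearMap.ker (sylMat f g f.natDegree g.natDegree p).mulVecLin) := by
  obtain ⟨f₁, rfl⟩ := hhf
  obtain ⟨g₁, rfl⟩ := hhg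
  have hh : h ≠ 0 := left_ne_zero_of_mul hf
  have hf₁ : f₁ ≠ 0 := right_ne_zero_of_mul hf
  have hg₁ : g₁ ≠ 0 := right_ne_zero_of_mul hg
  have hdeg : ∀ P ∈ degreeLT K (p + 1), ∀ q ≠ 0, (P * q).degree < (h * q).natDegree := by
    intro P hP q hq
    rw [natDegree_mul hh hq]
    refine degree_mul_lt_add_natDegree hq ((mem_degreeLT.1 hP).trans_le ?_)
    exact_mod_cast hp
  let Φ : degreeLT K (p + 1) →ₗ[K]
      (Fin (h * g₁).natDegree ⊕ Fin (h * f₁).natDegree → K) :=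
    sylCoeffs _ _ ∘ₗ (LinearMap.mulRight K g₁).prod (-LinearMap.mulRight K f₁) ∘ₗ
      (degreeLT K (p + 1)).subtype
  have hΦ : ∀ P, Φ P ∈ LinearMap.ker (sylMat (h * f₁) (h * g₁) _ _ p).mulVecLin := by
    rintro ⟨P, hP⟩
    ext r
    have := sylMat_mulVec_sylCoeffs (h * f₁) (h * g₁) p (hdeg P hP g₁ hg₁)
      (by rw [degree_neg]; exact hdeg P hP f₁ hf₁) r
    have hzero : P * g₁ * (h * f₁) + -(P * f₁) * (h * g₁) = 0 := by ring
    exact this.trans (by rw [hzero, coeff_zero]; rfl)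
  have hinj : Function.Injective (Φ.codRestrict _ hΦ) := by
    rw [← LinearMap.ker_eq_bot, LinearMap.ker_codRestrict, LinearMap.ker_eq_bot']
    rintro ⟨P, hP⟩ hΦP
    have hPg : P * g₁ = 0 := (degreeLTEquiv_eq_zero_iff_eq_zero
      (mem_degreeLT.2 (hdeg P hP g₁ hg₁))).1 (funext fun j => congrFun hΦP (Sum.inl j))
    exact Subtype.ext ((mul_eq_zero.1 hPg).resolve_right hg₁)
  have := LinearMap.finrank_le_finrank_of_injective hinj
  rwa [(degreeLTEquiv K (p + 1)).finrank_eq, finrank_fin_fun, Nat.add_one_le_iff] at this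

theorem sylMat_mulVecLin_surjective [DecidableEq K[X]] {f g : K[X]} (hf : f ≠ 0) (hg : g ≠ 0)
    {p : ℕ} (hp : (EuclideanDomain.gcd f g).natDegree ≤ p) :
    Function.Surjective (sylMat f g f.natDegree g.natDegree p).mulVecLin := by
  set h := EuclideanDomain.gcd f g
  have hh : h ≠ 0 := fun h0 => hf (EuclideanDomain.gcd_eq_zero_iff.1 h0).1
  rw [← LinearMap.range_eq_top, eq_top_iff, ← (Pi.basisFun K _).span_eq, Submodule.span_le]
  rintro _ ⟨r, rfl⟩
  have hr := r.isLt
  set n := f.natDegree + g.natDegree - 1 - r with hn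
  have hP : EuclideanDomain.gcdA f g * (X ^ n / h) * f +
      EuclideanDomain.gcdB f g * (X ^ n / h) * g = X ^ n - X ^ n % h := by
    linear_combination -(X ^ n / h) * EuclideanDomain.gcd_eq_gcd_ab f g +
      EuclideanDomain.div_add_mod (X ^ n) h
  have hmod_deg : ∀ m : ℕ, p ≤ m → (X ^ n % h).degree < (m : WithBot ℕ) := fun m hm =>
    (degree_mod_lt _ hh).trans_le (degree_le_natDegree.trans (WithBot.coe_le_coe.2 (hp.trans hm)))
  obtain ⟨A, B, hA, hB, hAB⟩ := exists_degree_lt_mul_add_mul_eq hf hg _ _ (by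
    rw [hP]
    refine (degree_sub_le _ _).trans_lt (max_lt ?_ (hmod_deg _ (by omega)))
    exact (degree_X_pow_le n).trans_lt (Nat.cast_lt.2 (by omega)))
  refine ⟨sylCoeffs _ _ (A, B), funext fun r' => ?_⟩
  have hr' := r'.isLt
  rw [mulVecLin_apply, sylMat_mulVec_sylCoeffs f g p hA hB, hAB, hP, coeff_sub, coeff_X_pow,
    coeff_eq_zero_of_degree_lt (hmod_deg _ (by omega))]
  simp only [sub_zero, Pi.basisFun_apply, Pi.single_apply, Fin.ext_iff]
  exact if_congr (by omega) rfl rfl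

end Sylvester

theorem stmt7_general {k : Type*} [Field k] (f g : Polynomial k) (a b p : ℕ) (hf : f.Monic)
    (hg : g.Monic) (hfa : f.natDegree = a)
    (hgb : g.natDegree = b) :
    p + 1 ≤ Module.finrank k (LinearMap.ker (sylMat f g a b p).mulVecLin) ↔
      p + 1 ≤ (@EuclideanDomain.gcd (Polynomial k) _ (Classical.decEq _) f g).natDegree := by
  let _ : DecidableEq k[X] := Classical.decEq _
  subst hfa hgb
  constructor
  · intro hker
    by_contra! hgcd
    have hdim := finrank_ker_mulVecLin_add_of_surjective _
      (sylMat_mulVecLin_surjective hf.ne_zero hg.ne_zero (Nat.le_of_lt_succ hgcd))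
    rw [Fintype.card_sum, Fintype.card_fin, Fintype.card_fin] at hdim
    omega
  · exact lt_finrank_ker_sylMat hf.ne_zero hg.ne_zero (EuclideanDomain.gcd_dvd_left f g)
      (EuclideanDomain.gcd_dvd_right f g)

/-- For monic `f, g` of degrees `a ≤ b` and `0 ≤ p < a`, the truncated Sylvester matrix
`Syl_p(f,g)` has kernel of dimension `≥ p + 1` iff `deg gcd(f,g) ≥ p + 1`. -/
theorem stmt7 {k : Type*} [Field k] (f g : Polynomial k) (a b p : ℕ) (hab : a ≤ b)
    (hpa : p < a) (hf : f.Monic) (hg : g.Monic) (hfa : f.natDegree = a)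
    (hgb : g.natDegree = b) :
    p + 1 ≤ Module.finrank k (LinearMap.ker (sylMat f g a b p).mulVecLin) ↔
      p + 1 ≤ (@EuclideanDomain.gcd (Polynomial k) _ (Classical.decEq _) f g).natDegree :=
  stmt7_general f g a b p hf hg hfa hgb
end

section
/- Let M = (m_{ij}) be a p × q matrix with entries in a commutative ring R, p ≤ q, such that m_{pq} is a unit. Let N be the (p-1) × (q-1) matrix with entries n_{ij} = m_{ij} - m_{pj} m_{iq} m_{pq}^{-1} for 1 ≤ i ≤ p-1, 1 ≤ j ≤ q-1. Then the ideal of R generated by the p × p minors of M equals the ideal generated by the (p-1) × (p-1) minors of N. -/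
/-!
Subtracting `m_iq m_pq⁻¹` times the last row from row `i < p` is a row operation of
determinant one, so it does not change the ideal of maximal minors. It turns `M` into a matrix
whose last column is `(0, …, 0, m_pq)` and whose top-left block is `N`. For such a matrix,
Laplace expansion along the last row writes every maximal minor as a combination of maximal
minors of `N`, and expanding a minor containing the last column along that column gives `m_pq`
times a minor of `N`.
-/

namespace Matrix

variable {R : Type*} [CommRing R]

def maxMinorsIdeal {m n : Type*} [Fintype m] [DecidableEq m] (A : Matrix m n R) : Ideal R :=
  Ideal.span {x | ∃ c : m ↪ n, x = (A.submatrix id c).det}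

section RowOperations

variable {m n : Type*} [Fintype m] [DecidableEq m]

theorem maxMinorsIdeal_mul_left {E : Matrix m m R} (hE : IsUnit E.det) (A : Matrix m n R) :
    maxMinorsIdeal (E * A) = maxMinorsIdeal A := by
  have hminor (c : m ↪ n) : ((E * A).submatrix id c).det = E.det * (A.submatrix id c).det := by
    rw [← det_mul]
    rfl
  obtain ⟨F, hF⟩ := hE.exists_left_inv
  apply le_antisymm <;> refine Ideal.span_le.mpr ?_ <;> rintro _ ⟨c, rfl⟩
  · rw [hminor]
    exact Ideal.mul_mem_left _ _ (Ideal.subset_span ⟨c, rfl⟩)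
  · rw [← one_mul (A.submatrix id c).det, ← hF, mul_assoc, ← hminor]
    exact Ideal.mul_mem_left _ _ (Ideal.subset_span ⟨c, rfl⟩)

theorem maxMinorsIdeal_add_vecMulVec_row (A : Matrix m n R) (r : m) (w : m → R) (hw : w r = 0) :
    maxMinorsIdeal (A + vecMulVec w (A r)) = maxMinorsIdeal A := by
  have hE : (1 + vecMulVec w (Pi.single r 1)).det = 1 := by
    rw [vecMulVec_eq Unit, det_one_add_replicateCol_mul_replicateRow, single_one_dotProduct, hw,
      add_zero]
  have hA : A + vecMulVec w (A r) = (1 + vecMulVec w (Pi.single r 1)) * A := by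
    rw [Matrix.add_mul, Matrix.one_mul, vecMulVec_mul, single_one_vecMul]
    rfl
  rw [hA, maxMinorsIdeal_mul_left (by rw [hE]; exact isUnit_one)]

end RowOperations

section LastColumn

variable {p q : ℕ} {B : Matrix (Fin (p + 1)) (Fin (q + 1)) R}

theorem det_submatrix_castSucc_mem_maxMinorsIdeal
    (hB : ∀ i : Fin p, B i.castSucc (Fin.last q) = 0)
    {f : Fin p → Fin (q + 1)} (hf : Function.Injective f) :
    (B.submatrix Fin.castSucc f).det ∈
      maxMinorsIdeal (B.submatrix Fin.castSucc Fin.castSucc) := by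
  by_cases hlast : ∃ k, f k = Fin.last q
  · obtain ⟨k, hk⟩ := hlast
    rw [det_eq_zero_of_column_eq_zero k fun i => by simp [hk, hB]]
    exact zero_mem _
  · push Not at hlast
    let d : Fin p ↪ Fin q := ⟨fun k => (f k).castPred (hlast k), fun a b hab =>
      hf (by simpa using congrArg Fin.castSucc hab)⟩
    have hd : B.submatrix Fin.castSucc f =
        (B.submatrix Fin.castSucc Fin.castSucc).submatrix id d := by
      ext i j
      rfl
    exact Ideal.subset_span ⟨d, by rw [hd]⟩

theorem maxMinorsIdeal_le_of_last_column_eq_zero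
    (hB : ∀ i : Fin p, B i.castSucc (Fin.last q) = 0) :
    maxMinorsIdeal B ≤ maxMinorsIdeal (B.submatrix Fin.castSucc Fin.castSucc) := by
  refine Ideal.span_le.mpr ?_
  rintro _ ⟨c, rfl⟩
  rw [det_succ_row _ (Fin.last p)]
  refine Ideal.sum_mem _ fun j _ => Ideal.mul_mem_left _ _ ?_
  rw [submatrix_submatrix, Fin.succAbove_last, Function.id_comp]
  exact det_submatrix_castSucc_mem_maxMinorsIdeal hB
    (c.injective.comp Fin.succAbove_right_injective)

theorem det_submatrix_snoc_last (hB : ∀ i : Fin p, B i.castSucc (Fin.last q) = 0)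
    (d : Fin p ↪ Fin q) (hd : Fin.last q ∉ Set.range (d.trans Fin.castSuccEmb)) :
    (B.submatrix id (Fin.Embedding.snoc _ hd)).det =
      B (Fin.last p) (Fin.last q) *
        ((B.submatrix Fin.castSucc Fin.castSucc).submatrix id d).det := by
  rw [det_succ_column _ (Fin.last p), Finset.sum_eq_single (Fin.last p)]
  · have hminor : (B.submatrix id (Fin.Embedding.snoc _ hd)).submatrix
        (Fin.last p).succAbove (Fin.last p).succAbove =
        (B.submatrix Fin.castSucc Fin.castSucc).submatrix id d := by
      ext i j
      simp
    rw [hminor, submatrix_apply, Fin.Embedding.snoc_last, (Even.add_self _).neg_one_pow, one_mul]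
    rfl
  · intro i _ hi
    obtain ⟨i, rfl⟩ := Fin.exists_castSucc_eq.mpr hi
    simp [hB]
  · simp

theorem maxMinorsIdeal_eq_of_last_column_eq_zero
    (hB : ∀ i : Fin p, B i.castSucc (Fin.last q) = 0)
    (hu : IsUnit (B (Fin.last p) (Fin.last q))) :
    maxMinorsIdeal B = maxMinorsIdeal (B.submatrix Fin.castSucc Fin.castSucc) := by
  refine le_antisymm (maxMinorsIdeal_le_of_last_column_eq_zero hB) (Ideal.span_le.mpr ?_)
  rintro _ ⟨d, rfl⟩
  have hd : Fin.last q ∉ Set.range (d.trans Fin.castSuccEmb) := by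
    rintro ⟨k, hk⟩
    exact Fin.castSucc_ne_last _ hk
  obtain ⟨v, hv⟩ := hu.exists_left_inv
  rw [← one_mul (_ : Matrix _ _ R).det, ← hv, mul_assoc, ← det_submatrix_snoc_last hB d hd]
  exact Ideal.mul_mem_left _ _ (Ideal.subset_span ⟨_, rfl⟩)

end LastColumn

end Matrix

open Matrix

theorem stmt8_general {R : Type*} [CommRing R] (p q : ℕ)
    (M : Matrix (Fin (p + 1)) (Fin (q + 1)) R)
    (hu : IsUnit (M (Fin.last p) (Fin.last q))) :
    Ideal.span { x | ∃ c : Fin (p + 1) ↪ Fin (q + 1), x = (M.submatrix id c).det } =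
      Ideal.span { x | ∃ c : Fin p ↪ Fin q, x =
        ((Matrix.of fun (i : Fin p) (j : Fin q) =>
          M i.castSucc j.castSucc -
            M (Fin.last p) j.castSucc * M i.castSucc (Fin.last q) *
              Ring.inverse (M (Fin.last p) (Fin.last q))).submatrix id c).det } := by
  set u := M (Fin.last p) (Fin.last q)
  let w : Fin (p + 1) → R := Fin.snoc (fun i => -(M i.castSucc (Fin.last q) * Ring.inverse u)) 0
  let B := M + vecMulVec w (M (Fin.last p))
  have hcol (i : Fin p) : B i.castSucc (Fin.last q) = 0 := by
    simp only [B, w, Matrix.add_apply, vecMulVec_apply, Fin.snoc_castSucc]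
    linear_combination (-M i.castSucc (Fin.last q)) * Ring.inverse_mul_cancel u hu
  have hcorner : B (Fin.last p) (Fin.last q) = u := by simp [B, w, u, vecMulVec_apply]
  have hblock : B.submatrix Fin.castSucc Fin.castSucc = Matrix.of fun (i : Fin p) (j : Fin q) =>
      M i.castSucc j.castSucc - M (Fin.last p) j.castSucc * M i.castSucc (Fin.last q) *
        Ring.inverse u := by
    ext i j
    simp only [B, w, submatrix_apply, Matrix.add_apply, vecMulVec_apply, Fin.snoc_castSucc,
      of_apply]
    ring
  change maxMinorsIdeal M = maxMinorsIdeal _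
  rw [← maxMinorsIdeal_add_vecMulVec_row M (Fin.last p) w (Fin.snoc_last _ _),
    maxMinorsIdeal_eq_of_last_column_eq_zero hcol (hcorner ▸ hu), hblock]

/-- If `M` is a `(p+1) × (q+1)` matrix over a commutative ring whose bottom-right entry is a
unit, then the ideal of maximal minors of `M` equals the ideal of maximal minors of the
`p × q` matrix `N` with `n i j = m i j - m (last) j * m i (last) * m (last) (last)⁻¹`. -/
theorem stmt8 {R : Type*} [CommRing R] (p q : ℕ) (hpq : p ≤ q)
    (M : Matrix (Fin (p + 1)) (Fin (q + 1)) R)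
    (hu : IsUnit (M (Fin.last p) (Fin.last q))) :
    Ideal.span { x | ∃ c : Fin (p + 1) ↪ Fin (q + 1), x = (M.submatrix id c).det } =
      Ideal.span { x | ∃ c : Fin p ↪ Fin q, x =
        ((Matrix.of fun (i : Fin p) (j : Fin q) =>
          M i.castSucc j.castSucc -
            M (Fin.last p) j.castSucc * M i.castSucc (Fin.last q) *
              Ring.inverse (M (Fin.last p) (Fin.last q))).submatrix id c).det } :=
  stmt8_general p q M hu
end

section
/- Let τ be a term order on S = k[x_0,...,x_r] with x_0 > x_1 > ... > x_r, and let V ⊆ S_a be a τ-segment (a monomial subspace such that if m ∈ V is a monomial and n is a degree-a monomial with n >_τ m, then n ∈ V) with dim_k(S_a/V) ≤ a. Then (x_0,...,x_{r-1})^a ⊆ V. -/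
/-- The (total) degree of a monomial exponent vector. -/
def mdeg {N : ℕ} (m : Fin N →₀ ℕ) : ℕ := m.sum fun _ e => e

/-- `D` is a `τ`-segment in degree `d`: a set of degree-`d` monomials containing, with any
monomial, every `τ`-larger monomial of degree `d`. -/
def IsSegment {N : ℕ} (τ : MonomialOrder (Fin N)) (d : ℕ) (D : Set (Fin N →₀ ℕ)) : Prop :=
  (∀ m ∈ D, mdeg m = d) ∧
    ∀ m ∈ D, ∀ n : Fin N →₀ ℕ, mdeg n = d → τ.toSyn m ≤ τ.toSyn n → n ∈ D

/-- The monomial order `τ` sorts the variables as `x₀ > x₁ > … > x_r`. -/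
def VarOrdered {N : ℕ} (τ : MonomialOrder (Fin N)) : Prop :=
  ∀ i j : Fin N, i ≤ j → τ.toSyn (Finsupp.single j 1) ≤ τ.toSyn (Finsupp.single i 1)

lemma toSyn_single {N : ℕ} (τ : MonomialOrder (Fin N)) (i : Fin N) (e : ℕ) :
    τ.toSyn (Finsupp.single i e) = e • τ.toSyn (Finsupp.single i 1) := by
  rw [← map_nsmul]
  congr 1
  rw [Finsupp.smul_single, smul_eq_mul, mul_one]

lemma mdeg_single_add_single {N : ℕ} (p q : Fin N) (hpq : p ≠ q) (b c : ℕ) :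
    mdeg (Finsupp.single p b + Finsupp.single q c) = b + c := by
  unfold mdeg
  rw [Finsupp.sum_add_index (by simp) (by simp)]
  simp [Finsupp.sum_single_index]

/-- If `V` is a `τ`-segment in degree `a` (for a term order with `x₀ > … > x_r`) whose
complement in `S_a` has dimension at most `a`, then `(x₀,…,x_r₋₁)^a ⊆ V`: every degree-`a`
monomial not involving the last variable belongs to `V`. -/
theorem stmt13 {r : ℕ} (τ : MonomialOrder (Fin (r + 1))) (hvar : VarOrdered τ)
    (a : ℕ) (D : Set (Fin (r + 1) →₀ ℕ)) (hseg : IsSegment τ a D)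
    (hfin : { m : Fin (r + 1) →₀ ℕ | mdeg m = a ∧ m ∉ D }.Finite)
    (hcard : { m : Fin (r + 1) →₀ ℕ | mdeg m = a ∧ m ∉ D }.ncard ≤ a) :
    ∀ m : Fin (r + 1) →₀ ℕ, mdeg m = a → m (Fin.last r) = 0 → m ∈ D := by
  intro m hdeg hlast
  by_contra hm
  -- a = 0 case: the complement is empty
  rcases Nat.eq_zero_or_pos a with ha | ha
  · subst ha
    have : { m : Fin (r + 1) →₀ ℕ | mdeg m = 0 ∧ m ∉ D } = ∅ :=
      Set.ncard_eq_zero hfin |>.mp (Nat.le_zero.mp hcard)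
    have : m ∈ ({} : Set (Fin (r+1) →₀ ℕ)) := this ▸ ⟨hdeg, hm⟩
    exact this
  -- r = 0, a > 0 : impossible
  rcases Nat.eq_zero_or_pos r with hr | hr
  · subst hr
    have : m = 0 := by
      ext i
      have : i = Fin.last 0 := Fin.ext (by omega)
      rw [this, hlast]; rfl
    rw [this] at hdeg
    simp [mdeg] at hdeg
    omega
  -- main case
  set p : Fin (r + 1) := ⟨r - 1, by omega⟩ with hp
  have hpne : p ≠ Fin.last r := by
    simp only [Fin.ne_iff_vne, hp, Fin.last]
    omega
  have hple : p ≤ Fin.last r := by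
    simp only [Fin.le_iff_val_le_val, hp, Fin.last]; omega
  -- the monomials x_p^(a-j) x_last^j
  set f : ℕ → (Fin (r + 1) →₀ ℕ) := fun j =>
    Finsupp.single p (a - j) + Finsupp.single (Fin.last r) j with hf
  have hfdeg : ∀ j ≤ a, mdeg (f j) = a := by
    intro j hj
    rw [hf]
    rw [mdeg_single_add_single p (Fin.last r) hpne]
    omega
  -- toSyn (f 0) ≤ toSyn m
  have hstep : τ.toSyn (f 0) ≤ τ.toSyn m := by
    have hm' : m = m.sum fun i e => Finsupp.single i e := (Finsupp.sum_single m).symm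
    calc τ.toSyn (f 0) = a • τ.toSyn (Finsupp.single p 1) := by
          show τ.toSyn (Finsupp.single p (a - 0) + Finsupp.single (Fin.last r) 0) = _
          rw [Nat.sub_zero, Finsupp.single_zero, add_zero, toSyn_single]
      _ = (m.support.sum fun i => m i) • τ.toSyn (Finsupp.single p 1) := by
          rw [← hdeg]; rfl
      _ = m.support.sum fun i => (m i) • τ.toSyn (Finsupp.single p 1) := by
          rw [Finset.sum_smul]
      _ ≤ m.support.sum fun i => (m i) • τ.toSyn (Finsupp.single i 1) := by
          apply Finset.sum_le_sum
          intro i hi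
          have hine : i ≠ Fin.last r := by
            intro h; rw [h] at hi; exact (Finsupp.mem_support_iff.mp hi) hlast
          have hip : i ≤ p := by
            simp only [Fin.le_iff_val_le_val, hp]
            have := i.isLt
            have : i.val ≠ r := fun h => hine (Fin.ext h)
            omega
          exact nsmul_le_nsmul_right (hvar i p hip) _
      _ = m.support.sum fun i => τ.toSyn (Finsupp.single i (m i)) := by
          exact Finset.sum_congr rfl fun i _ => (toSyn_single τ i (m i)).symm
      _ = τ.toSyn m := by
          conv_rhs => rw [hm']
          rw [Finsupp.sum, map_sum]
  -- each f j with j ≤ a satisfies toSyn (f j) ≤ toSyn m, hence f j ∉ D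
  have hnot : ∀ j ≤ a, f j ∉ D := by
    intro j hj hmem
    have h1 : τ.toSyn (f j) ≤ τ.toSyn (f 0) := by
      show τ.toSyn (Finsupp.single p (a - j) + Finsupp.single (Fin.last r) j)
        ≤ τ.toSyn (Finsupp.single p (a - 0) + Finsupp.single (Fin.last r) 0)
      rw [Nat.sub_zero, Finsupp.single_zero, add_zero, map_add, toSyn_single τ p (a - j),
        toSyn_single τ (Fin.last r) j, toSyn_single τ p a]
      calc (a - j) • τ.toSyn (Finsupp.single p 1) + j • τ.toSyn (Finsupp.single (Fin.last r) 1)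
          ≤ (a - j) • τ.toSyn (Finsupp.single p 1) + j • τ.toSyn (Finsupp.single p 1) := by
            gcongr
            exact hvar p (Fin.last r) hple
        _ = a • τ.toSyn (Finsupp.single p 1) := by
            rw [← add_nsmul]; congr 1; omega
    exact hm (hseg.2 _ hmem m hdeg (h1.trans hstep))
  -- derive cardinality contradiction
  have hsub : (Finset.range (a + 1)).image f ⊆ hfin.toFinset := by
    intro x hx
    simp only [Finset.mem_image, Finset.mem_range] at hx
    obtain ⟨j, hj, rfl⟩ := hx
    simp only [Set.Finite.mem_toFinset, Set.mem_setOf_eq]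
    exact ⟨hfdeg j (by omega), hnot j (by omega)⟩
  have hinj : Set.InjOn f (Finset.range (a + 1)) := by
    intro x _ y _ hxy
    have : (f x) (Fin.last r) = (f y) (Fin.last r) := by rw [hxy]
    simpa [hf, Finsupp.single_apply, hpne] using this
  have hc1 : ((Finset.range (a + 1)).image f).card = a + 1 := by
    rw [Finset.card_image_of_injOn (by simpa using hinj)]
    simp
  have h2 := Finset.card_le_card hsub
  rw [hc1] at h2
  rw [Set.ncard_eq_toFinset_card _ hfin] at hcard
  omega
end

section
/- Let τ be a term order on S = k[x_0,...,x_r] with x_0 > ... > x_r, and let V ⊆ S_a be a τ-segment with dim_k(S_a/V) ≤ a. Then S_1·V is a τ-segment in S_{a+1} and dim_k(S_{a+1}/S_1 V) = dim_k(S_a/V). -/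
open Finsupp

variable {N : ℕ}

/-- The degree-`d` monomials outside `D`, a monomial basis of `S_d / ⟨D⟩`. -/
def degCompl (d : ℕ) (D : Set (Fin N →₀ ℕ)) : Set (Fin N →₀ ℕ) :=
  {m | mdeg m = d ∧ m ∉ D}

/-- The monomials of `S₁ · ⟨D⟩`. -/
def upShadow (D : Set (Fin N →₀ ℕ)) : Set (Fin N →₀ ℕ) :=
  {n | ∃ m ∈ D, ∃ i : Fin N, n = m + single i 1}

def IsMinVar (τ : MonomialOrder (Fin N)) (z : Fin N) : Prop :=
  ∀ i, τ.toSyn (single z 1) ≤ τ.toSyn (single i 1)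

lemma mdeg_eq_degree (m : Fin N →₀ ℕ) : mdeg m = m.degree := rfl

lemma mdeg_add_single (m : Fin N →₀ ℕ) (i : Fin N) : mdeg (m + single i 1) = mdeg m + 1 := by
  simp [mdeg_eq_degree]

lemma degCompl_finite (d : ℕ) (D : Set (Fin N →₀ ℕ)) : (degCompl d D).Finite :=
  (finite_of_degree_eq d).subset fun _ hm => hm.1

lemma sub_single_add_cancel {n : Fin N →₀ ℕ} {j : Fin N} (hj : n j ≠ 0) :
    n - single j 1 + single j 1 = n :=
  tsub_add_cancel_of_le (single_le_iff.mpr (Nat.one_le_iff_ne_zero.mpr hj))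

lemma sub_single_mem_degCompl {a : ℕ} {D : Set (Fin N →₀ ℕ)} {n : Fin N →₀ ℕ}
    (hn : n ∈ degCompl (a + 1) (upShadow D)) {j : Fin N} (hj : n j ≠ 0) :
    n - single j 1 ∈ degCompl a D := by
  have hcancel := sub_single_add_cancel hj
  refine ⟨?_, fun hD => hn.2 ⟨_, hD, j, hcancel.symm⟩⟩
  have := hn.1
  rw [← hcancel, mdeg_add_single] at this
  omega

section MinimalVariable

variable {τ : MonomialOrder (Fin N)} {z : Fin N}

lemma IsMinVar.toSyn_single_le (hz : IsMinVar τ z) (i : Fin N) (k : ℕ) :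
    τ.toSyn (single z k) ≤ τ.toSyn (single i k) := by
  have := nsmul_le_nsmul_right (hz i) k
  rwa [← map_nsmul, ← map_nsmul, smul_single_one, smul_single_one] at this

lemma IsMinVar.toSyn_single_degree_le (hz : IsMinVar τ z) (u : Fin N →₀ ℕ) :
    τ.toSyn (single z u.degree) ≤ τ.toSyn u := by
  induction u using Finsupp.induction with
  | zero => simp
  | single_add i k u _ _ ih =>
    rw [map_add, degree_single, single_add, map_add, map_add]
    exact add_le_add (hz.toSyn_single_le i k) ih

lemma IsMinVar.toSyn_add_single_le (hz : IsMinVar τ z) (m : Fin N →₀ ℕ) (i : Fin N) :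
    τ.toSyn (m + single z 1) ≤ τ.toSyn (m + single i 1) := by
  simpa only [map_add] using add_le_add_right (hz i) (τ.toSyn m)

variable {a : ℕ} {D : Set (Fin N →₀ ℕ)}

lemma IsSegment.mem_degCompl_of_le (hseg : IsSegment τ a D) {m q : Fin N →₀ ℕ}
    (hm : m ∈ degCompl a D) (hq : mdeg q = a) (hle : τ.toSyn q ≤ τ.toSyn m) :
    q ∈ degCompl a D :=
  ⟨hq, fun hqD => hm.2 (hseg.2 q hqD m hm.1 hle)⟩

lemma IsSegment.mem_of_add_single_le (hseg : IsSegment τ a D) (hz : IsMinVar τ z)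
    {m w : Fin N →₀ ℕ} (hm : m ∈ D) (hw : mdeg w = a) (i : Fin N) (hle : τ.toSyn (m + single i 1) ≤ τ.toSyn (w + single z 1)) :
    w ∈ D := by
  refine hseg.2 m hm w hw ?_
  have := (hz.toSyn_add_single_le m i).trans hle
  rw [map_add, map_add] at this
  exact le_of_add_le_add_right this

lemma IsSegment.apply_ne_zero_of_mem_degCompl (hseg : IsSegment τ a D) (hz : IsMinVar τ z)
    (hcard : (degCompl a D).ncard ≤ a) {m : Fin N →₀ ℕ} (hm : m ∈ degCompl a D) : m z ≠ 0 := by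
  intro hmz
  have below : ∀ k ≤ a, ∃ g ∈ degCompl a D, g z = k := by
    intro k hk
    obtain ⟨u, hum, hu⟩ := m.exists_le_degree_eq k (by rwa [← mdeg_eq_degree, hm.1])
    obtain ⟨v, rfl⟩ := le_iff_exists_add.mp hum
    -- trade the degree-`k` divisor `u` of `m = u + v` for `z ^ k`
    refine ⟨single z k + v, hseg.mem_degCompl_of_le hm ?_ ?_, ?_⟩
    · rw [← hm.1, mdeg_eq_degree, mdeg_eq_degree, map_add, map_add, degree_single, hu]
    · rw [map_add, map_add, ← hu]
      exact add_le_add_left (hz.toSyn_single_degree_le u) _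
    · simp only [Finsupp.add_apply, single_eq_same] at hmz ⊢
      omega
  choose! g hg using below
  have hinj : Set.InjOn g (Finset.range (a + 1)) := fun k hk l hl hkl => by
    simp only [Finset.coe_range, Set.mem_Iio] at hk hl
    rw [← (hg k (by omega)).2, ← (hg l (by omega)).2, hkl]
  have := Set.ncard_le_ncard_of_injOn g (fun k hk => (hg k (by simp at hk; omega)).1) hinj
    (degCompl_finite a D)
  rw [Set.ncard_coe_finset, Finset.card_range] at this
  omega

lemma IsSegment.degCompl_upShadow (hseg : IsSegment τ a D) (hz : IsMinVar τ z)
    (hdvd : ∀ m ∈ degCompl a D, m z ≠ 0) :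
    degCompl (a + 1) (upShadow D) = (· + single z 1) '' degCompl a D := by
  ext n
  constructor
  · intro hn
    obtain ⟨j, hj⟩ : ∃ j, n j ≠ 0 :=
      Finsupp.ne_iff.mp fun (h0 : n = 0) => by simpa [h0, mdeg_eq_degree] using hn.1
    have hnz : n z ≠ 0 := by
      have := hdvd _ (sub_single_mem_degCompl hn hj)
      rw [tsub_apply] at this
      omega
    exact ⟨_, sub_single_mem_degCompl hn hnz, sub_single_add_cancel hnz⟩
  · rintro ⟨m, hm, rfl⟩
    refine ⟨by rw [mdeg_add_single, hm.1], ?_⟩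
    rintro ⟨m', hm', i, heq⟩
    exact hm.2 (hseg.mem_of_add_single_le hz hm' hm.1 i (heq ▸ le_rfl))

lemma IsSegment.upShadow (hseg : IsSegment τ a D) (hz : IsMinVar τ z)
    (hdvd : ∀ m ∈ degCompl a D, m z ≠ 0) : IsSegment τ (a + 1) (upShadow D) := by
  refine ⟨fun _ ⟨m, hm, i, hn⟩ => by rw [hn, mdeg_add_single, hseg.1 m hm], ?_⟩
  rintro _ ⟨m, hm, i, rfl⟩ n hn hle
  by_contra hnD
  obtain ⟨w, hw, rfl⟩ : n ∈ (· + single z 1) '' degCompl a D :=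
    hseg.degCompl_upShadow hz hdvd ▸ ⟨hn, hnD⟩
  exact hw.2 (hseg.mem_of_add_single_le hz hm hw.1 i hle)

end MinimalVariable

theorem stmt14_general {r : ℕ} (τ : MonomialOrder (Fin (r + 1))) (hvar : VarOrdered τ)
    (a : ℕ) (D : Set (Fin (r + 1) →₀ ℕ)) (hseg : IsSegment τ a D)
    (hcard : { m : Fin (r + 1) →₀ ℕ | mdeg m = a ∧ m ∉ D }.ncard ≤ a) :
    IsSegment τ (a + 1) { n | ∃ m ∈ D, ∃ i : Fin (r + 1), n = m + Finsupp.single i 1 } ∧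
      { n : Fin (r + 1) →₀ ℕ | mdeg n = a + 1 ∧
          n ∉ { n | ∃ m ∈ D, ∃ i : Fin (r + 1), n = m + Finsupp.single i 1 } }.ncard =
        { m : Fin (r + 1) →₀ ℕ | mdeg m = a ∧ m ∉ D }.ncard := by
  have hz : IsMinVar τ (Fin.last r) := fun i => hvar i _ (Fin.le_last i)
  have hdvd : ∀ m ∈ degCompl a D, m (Fin.last r) ≠ 0 :=
    fun _ hm => hseg.apply_ne_zero_of_mem_degCompl hz hcard hm
  refine ⟨hseg.upShadow hz hdvd, ?_⟩
  change (degCompl (a + 1) (upShadow D)).ncard = (degCompl a D).ncard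
  rw [hseg.degCompl_upShadow hz hdvd]
  exact Set.ncard_image_of_injective _ (add_left_injective _)

/-- If `V` is a `τ`-segment in degree `a` (for a term order with `x₀ > … > x_r`) with
`dim S_a/V ≤ a`, then `S₁·V` is a `τ`-segment in degree `a + 1` and
`dim S_{a+1}/S₁V = dim S_a/V`. -/
theorem stmt14 {r : ℕ} (τ : MonomialOrder (Fin (r + 1))) (hvar : VarOrdered τ)
    (a : ℕ) (D : Set (Fin (r + 1) →₀ ℕ)) (hseg : IsSegment τ a D)
    (hfin : { m : Fin (r + 1) →₀ ℕ | mdeg m = a ∧ m ∉ D }.Finite)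
    (hcard : { m : Fin (r + 1) →₀ ℕ | mdeg m = a ∧ m ∉ D }.ncard ≤ a) :
    IsSegment τ (a + 1) { n | ∃ m ∈ D, ∃ i : Fin (r + 1), n = m + Finsupp.single i 1 } ∧
      { n : Fin (r + 1) →₀ ℕ | mdeg n = a + 1 ∧
          n ∉ { n | ∃ m ∈ D, ∃ i : Fin (r + 1), n = m + Finsupp.single i 1 } }.ncard =
        { m : Fin (r + 1) →₀ ℕ | mdeg m = a ∧ m ∉ D }.ncard :=
  stmt14_general τ hvar a D hseg hcard
end

section
/- For s generic points in ℙ^r (a generic choice of the s(r+1) homogeneous coordinates), the defining ideal I contains no nonzero form of degree d ≤ s supported on at most s monomials; equivalently, for each d ≤ s, every maximal minor of the s × C(r+d,r) evaluation matrix X_d (rows indexed by points, columns by degree-d monomials, entries the monomial evaluated at the point) is nonzero. -/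
/-!
Evaluating a form `f` supported on the monomials `T` at points `p₁, …, p_m` is the
matrix–vector product of the evaluation matrix `(pᵢ^α)_{i, α ∈ T}` with the coefficient
vector of `f`. If `f ≠ 0` vanishes at `|T| = m` of the points, this square evaluation matrix is
singular. Its determinant is a specialisation of the generic minor, with the coordinates of
the points replaced by indeterminates, and the generic minor is a nonzero polynomial: the
identity permutation contributes the monomial `∏ᵢ Xᵢ^(αᵢ)`, and no other permutation produces
it because the rows use disjoint sets of variables and the columns distinct exponents. The
product of all generic minors with at most `s` rows and columns among the monomials of degree
`≤ s` is therefore a valid `P`.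
-/

open MvPolynomial Finset

theorem Finsupp.sum_mapDomain_prodMk_apply {n σ ι : Type*} [Fintype n] {row : n → σ}
    (hrow : Function.Injective row)
    (c : n → ι →₀ ℕ) (j : n) (l : ι) :
    (∑ i, (c i).mapDomain (Prod.mk (row i))) (row j, l) = c j l := by
  rw [Finsupp.finsetSum_apply, Finset.sum_eq_single j]
  · exact Finsupp.mapDomain_apply (Prod.mk_right_injective _) _ _
  · intro i _ hij
    refine Finsupp.mapDomain_of_notMem_range _ _ ?_
    rintro ⟨l', hl'⟩
    exact hij (hrow (congrArg Prod.fst hl'))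
  · simp

namespace MvPolynomial

variable {n σ ι R : Type*}

theorem det_monomial_ne_zero [Fintype n] [DecidableEq n] [CommRing R] [Nontrivial R]
    (e : n → n → σ →₀ ℕ) (he : ∀ π : Equiv.Perm n, ∑ i, e (π i) i = ∑ i, e i i → π = 1) :
    (Matrix.of fun i j => monomial (e i j) (1 : R)).det ≠ 0 := by
  classical
  intro h
  have hcoeff : coeff (∑ i, e i i) (Matrix.of fun i j => monomial (e i j) (1 : R)).det = 1 := by
    simp only [Matrix.det_apply, Matrix.of_apply, ← monomial_sum_one, coeff_sum, coeff_smul]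
    rw [sum_eq_single 1]
    · simp
    · intro π _ hπ
      rw [coeff_monomial, if_neg fun h => hπ (he π h), smul_zero]
    · simp
  simp [h] at hcoeff

noncomputable def genericMinor [Fintype n] [DecidableEq n] [CommRing R]
    (row : n → σ) (col : n → ι →₀ ℕ) : MvPolynomial (σ × ι) R :=
  (Matrix.of fun i j => rename (Prod.mk (row i)) (monomial (col j) (1 : R))).det

variable [Fintype n] [DecidableEq n]

theorem genericMinor_ne_zero [CommRing R] [Nontrivial R] {row : n → σ} {col : n → ι →₀ ℕ}
    (hrow : Function.Injective row) (hcol : Function.Injective col) :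
    genericMinor (R := R) row col ≠ 0 := by
  simp only [genericMinor, rename_monomial]
  refine det_monomial_ne_zero _ fun π hπ => ?_
  have hcol_perm : ∀ j, col (π.symm j) = col j := by
    intro j
    ext l
    have h := congrArg (fun μ => μ (row j, l)) hπ
    rw [← Equiv.sum_comp π.symm] at h
    simp only [Equiv.apply_symm_apply] at h
    rwa [Finsupp.sum_mapDomain_prodMk_apply hrow (fun i => col (π.symm i)),
      Finsupp.sum_mapDomain_prodMk_apply hrow col] at h
  exact Equiv.ext fun j => by simpa using (hcol (hcol_perm (π j))).symm

theorem eval_genericMinor [CommRing R] (row : n → σ) (col : n → ι →₀ ℕ) (A : σ → ι → R) :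
    eval (fun q : σ × ι => A q.1 q.2) (genericMinor row col)
      = (Matrix.of fun i j => eval (A (row i)) (monomial (col j) 1)).det := by
  rw [genericMinor, RingHom.map_det]
  congr 1
  ext i j
  simp [eval_rename, Function.comp_def]

theorem det_eval_monomial_eq_zero [DecidableEq ι] [Field R] {f : MvPolynomial ι R} (hf : f ≠ 0)
    (p : f.support → ι → R) (hp : ∀ a, eval (p a) f = 0) :
    (Matrix.of fun a b : f.support => eval (p a) (monomial (b : ι →₀ ℕ) 1)).det = 0 := by
  refine Matrix.exists_mulVec_eq_zero_iff.1 ⟨fun b : f.support => coeff (b : ι →₀ ℕ) f, ?_, ?_⟩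
  · obtain ⟨a, ha⟩ := support_nonempty.2 hf
    exact fun h => (mem_support_iff.1 ha) (congrFun h ⟨a, ha⟩)
  · ext a
    rw [Pi.zero_apply, ← hp a, eval_eq]
    simp only [Matrix.mulVec, dotProduct, Matrix.of_apply, eval_monomial, one_mul, mul_comm]
    exact sum_attach f.support fun d => coeff d f * d.prod fun l e => p a l ^ e

end MvPolynomial

theorem exists_ne_zero_card_lt_card_support_of_eval_eq_zero {σ ι k : Type*}
    [Fintype σ] [DecidableEq σ] [DecidableEq ι] [Field k] (S : Finset (ι →₀ ℕ)) :
    ∃ P : MvPolynomial (σ × ι) k, P ≠ 0 ∧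
      ∀ A : σ → ι → k, eval (fun q : σ × ι => A q.1 q.2) P ≠ 0 →
        ∀ f : MvPolynomial ι k, f ≠ 0 → f.support ⊆ S → (∀ i, eval (A i) f = 0) →
          Fintype.card σ < f.support.card := by
  refine ⟨∏ T ∈ S.powerset, ∏ row : T ↪ σ, genericMinor row Subtype.val,
    prod_ne_zero_iff.2 fun T _ => prod_ne_zero_iff.2 fun row _ =>
      genericMinor_ne_zero row.injective Subtype.val_injective, ?_⟩
  intro A hA f hf hfS hfA
  by_contra! hcard
  obtain ⟨row⟩ : Nonempty (f.support ↪ σ) :=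
    Function.Embedding.nonempty_of_card_le (by simpa using hcard)
  have hminor : eval (fun q : σ × ι => A q.1 q.2) (genericMinor row Subtype.val) ≠ 0 := by
    intro h
    simp only [map_prod] at hA
    exact hA (prod_eq_zero (mem_powerset.2 hfS) (prod_eq_zero (mem_univ row) h))
  rw [eval_genericMinor] at hminor
  exact hminor (det_eval_monomial_eq_zero hf _ fun a => hfA (row a))

theorem MvPolynomial.IsHomogeneous.support_subset_Iic {ι R : Type*} [DecidableEq ι] [Finite ι]
    [CommSemiring R]
    {f : MvPolynomial ι R} {d s : ℕ} (hf : f.IsHomogeneous d) (hd : d ≤ s) :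
    f.support ⊆ Iic (Finsupp.equivFunOnFinite.symm fun _ => s) := by
  intro α hα
  rw [mem_Iic]
  intro j
  have hdeg : α.degree = d := by
    rw [Finsupp.degree_eq_weight_one]
    exact hf (mem_support_iff.1 hα)
  simpa using (Finsupp.le_degree j α).trans (hdeg.trans_le hd)

theorem stmt16_general {k : Type*} [Field k] (r s : ℕ) :
    ∃ P : MvPolynomial (Fin s × Fin (r + 1)) k, P ≠ 0 ∧
      ∀ A : Fin s → Fin (r + 1) → k,
        eval (fun q : Fin s × Fin (r + 1) => A q.1 q.2) P ≠ 0 →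
          ∀ d ≤ s, ∀ f ∈ vanishingIdeal k
              { x : Fin (r + 1) → k | ∃ (i : Fin s) (t : k), x = t • A i },
            f ≠ 0 → f.IsHomogeneous d → s < f.support.card := by
  obtain ⟨P, hP, hPA⟩ := exists_ne_zero_card_lt_card_support_of_eval_eq_zero (σ := Fin s) (k := k)
    (Iic (Finsupp.equivFunOnFinite.symm fun _ : Fin (r + 1) => s))
  refine ⟨P, hP, fun A hA d hd f hf hf0 hhom => ?_⟩
  have hfA : ∀ i, eval (A i) f = 0 := fun i =>
    mem_vanishingIdeal_iff.1 hf (A i) ⟨i, 1, (one_smul k _).symm⟩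
  simpa using hPA A hA f hf0 (hhom.support_subset_Iic hd) hfA

/-- For a generic choice of the `s(r+1)` homogeneous coordinates of `s` points in `ℙ^r`
(i.e. on the nonvanishing locus of some nonzero polynomial in the coordinates), the
vanishing ideal `I` of the points contains no nonzero form of degree `d ≤ s` supported on at
most `s` monomials. -/
theorem stmt16 {k : Type*} [Field k] [IsAlgClosed k] [CharZero k] (r s : ℕ) :
    ∃ P : MvPolynomial (Fin s × Fin (r + 1)) k, P ≠ 0 ∧
      ∀ A : Fin s → Fin (r + 1) → k,
        eval (fun q : Fin s × Fin (r + 1) => A q.1 q.2) P ≠ 0 →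
          ∀ d ≤ s, ∀ f ∈ vanishingIdeal k
              { x : Fin (r + 1) → k | ∃ (i : Fin s) (t : k), x = t • A i },
            f ≠ 0 → f.IsHomogeneous d → s < f.support.card :=
  stmt16_general r s
end
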